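/- Let n, k be integers with 0 ≤ 2k ≤ n. Then A⁰_{n,k} equals the linear span of the pseudo-monomials (x_{i_1}−x_{j_1})(x_{i_2}−x_{j_2})⋯(x_{i_k}−x_{j_k}), taken over all choices of 2k pairwise distinct indices i_1,…,i_k,j_1,…,j_k in {1,…,n}. -/

import Mathlib

open MvPolynomial Finset

noncomputable section

/-- The "square-free monomial" `x_I = ∏_{i ∈ I} x_i`. -/
def xI (n : ℕ) (I : Finset (Fin n)) : MvPolynomial (Fin n) ℂ := ∏ i ∈ I, X i

/-- `A_{n,k}`: the span of the square-free monomials of degree `k`. -/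
def Aspace (n k : ℕ) : Submodule ℂ (MvPolynomial (Fin n) ℂ) :=
  Submodule.span ℂ {f | ∃ I : Finset (Fin n), I.card = k ∧ f = xI n I}

/-- The coefficient `c_I` of the monomial `x_I` in `f`. -/
def coeffI {n : ℕ} (f : MvPolynomial (Fin n) ℂ) (I : Finset (Fin n)) : ℂ :=
  MvPolynomial.coeff (∑ i ∈ I, Finsupp.single i 1) f

-- basic
def dI {n : ℕ} (I : Finset (Fin n)) : Fin n →₀ ℕ := ∑ i ∈ I, Finsupp.single i 1

lemma coeffI_eq {n : ℕ} (f : MvPolynomial (Fin n) ℂ) (I : Finset (Fin n)) :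
    coeffI f I = coeff (dI I) f := rfl

lemma dI_apply {n : ℕ} (I : Finset (Fin n)) (x : Fin n) :
    dI I x = if x ∈ I then 1 else 0 := by
  classical
  rw [dI, Finsupp.finset_sum_apply]
  simp [Finsupp.single_apply, Finset.sum_ite_eq' I x (fun _ => 1)]

lemma dI_injective {n : ℕ} : Function.Injective (dI (n := n)) := by
  intro I J h
  ext x
  have := congrArg (fun g => g x) h
  simp only [dI_apply] at this
  by_cases hI : x ∈ I <;> by_cases hJ : x ∈ J <;> simp_all

lemma xI_eq_monomial {n : ℕ} (I : Finset (Fin n)) : xI n I = monomial (dI I) 1 := by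
  classical
  induction I using Finset.induction with
  | empty => simp [xI, dI]
  | @insert a s h ih =>
    rw [xI, Finset.prod_insert h, ← xI, ih,
      show dI (insert a s) = Finsupp.single a 1 + dI s from by rw [dI, dI, Finset.sum_insert h],
      X, monomial_mul, one_mul]

lemma coeffI_xI {n : ℕ} (S M : Finset (Fin n)) :
    coeffI (xI n S) M = if S = M then 1 else 0 := by
  rw [coeffI_eq, xI_eq_monomial, coeff_monomial]
  by_cases h : S = M
  · simp [h]
  · rw [if_neg (fun hd => h (dI_injective hd)), if_neg h]

lemma coeffI_add {n : ℕ} (f g : MvPolynomial (Fin n) ℂ) (M : Finset (Fin n)) :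
    coeffI (f + g) M = coeffI f M + coeffI g M := by simp [coeffI_eq, coeff_add]

lemma coeffI_sub {n : ℕ} (f g : MvPolynomial (Fin n) ℂ) (M : Finset (Fin n)) :
    coeffI (f - g) M = coeffI f M - coeffI g M := by simp [coeffI_eq, coeff_sub]

lemma coeffI_smul {n : ℕ} (a : ℂ) (f : MvPolynomial (Fin n) ℂ) (M : Finset (Fin n)) :
    coeffI (a • f) M = a * coeffI f M := by simp [coeffI_eq, coeff_smul]

lemma coeffI_zero {n : ℕ} (M : Finset (Fin n)) : coeffI (0 : MvPolynomial (Fin n) ℂ) M = 0 := by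
  simp [coeffI_eq]

lemma coeffI_sum {n : ℕ} {ι : Type*} (s : Finset ι) (f : ι → MvPolynomial (Fin n) ℂ)
    (M : Finset (Fin n)) : coeffI (∑ i ∈ s, f i) M = ∑ i ∈ s, coeffI (f i) M := by
  simp [coeffI_eq, MvPolynomial.coeff_sum]

/-- span of square-free monomials of degree k with variables in V -/
def AspV (n k : ℕ) (V : Finset (Fin n)) : Submodule ℂ (MvPolynomial (Fin n) ℂ) :=
  Submodule.span ℂ {f | ∃ I : Finset (Fin n), I.card = k ∧ I ⊆ V ∧ f = xI n I}

lemma Aspace_eq_AspV (n k : ℕ) : Aspace n k = AspV n k univ := by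
  unfold Aspace AspV
  congr 1
  ext f
  simp [Finset.subset_univ]

lemma AspV_le_Aspace {n k : ℕ} (V : Finset (Fin n)) : AspV n k V ≤ Aspace n k := by
  apply Submodule.span_mono
  rintro f ⟨I, h1, _, h3⟩
  exact ⟨I, h1, h3⟩

lemma coeffI_of_mem_AspV {n k : ℕ} {V : Finset (Fin n)} {f : MvPolynomial (Fin n) ℂ}
    (hf : f ∈ AspV n k V) {M : Finset (Fin n)} (hM : coeffI f M ≠ 0) :
    M.card = k ∧ M ⊆ V := by
  by_contra hc
  apply hM
  have : AspV n k V ≤ LinearMap.ker (lcoeff ℂ (dI M)) := by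
    rw [AspV, Submodule.span_le]
    rintro g ⟨I, h1, h2, rfl⟩
    simp only [SetLike.mem_coe, LinearMap.mem_ker, lcoeff_apply]
    rw [← coeffI_eq, coeffI_xI, if_neg]
    rintro rfl
    exact hc ⟨h1, h2⟩
  simpa [coeffI_eq] using this hf

lemma expansion {n k : ℕ} {f : MvPolynomial (Fin n) ℂ} (hf : f ∈ Aspace n k) :
    f = ∑ I ∈ univ.powersetCard k, coeffI f I • xI n I := by
  classical
  set E : MvPolynomial (Fin n) ℂ →ₗ[ℂ] MvPolynomial (Fin n) ℂ :=
    LinearMap.id - ∑ I ∈ univ.powersetCard k, (lcoeff ℂ (dI I)).smulRight (xI n I) with hE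
  have hker : Aspace n k ≤ LinearMap.ker E := by
    rw [Aspace, Submodule.span_le]
    rintro g ⟨S, hS, rfl⟩
    simp only [SetLike.mem_coe, LinearMap.mem_ker, hE, LinearMap.sub_apply, LinearMap.id_apply,
      LinearMap.coe_sum, Finset.sum_apply, LinearMap.smulRight_apply, lcoeff_apply]
    rw [sub_eq_zero]
    rw [Finset.sum_eq_single S]
    · rw [← coeffI_eq, coeffI_xI, if_pos rfl, one_smul]
    · intro I _ hIS
      rw [← coeffI_eq, coeffI_xI, if_neg (fun h => hIS h.symm), zero_smul]
    · intro h
      exact absurd (Finset.mem_powersetCard.2 ⟨Finset.subset_univ S, hS⟩) h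
  have h0 := hker hf
  simp only [LinearMap.mem_ker, hE, LinearMap.sub_apply, LinearMap.id_apply, LinearMap.coe_sum,
    Finset.sum_apply, LinearMap.smulRight_apply, lcoeff_apply, sub_eq_zero] at h0
  simpa [coeffI_eq] using h0

lemma eq_zero_of_coeffI {n k : ℕ} {f : MvPolynomial (Fin n) ℂ} (hf : f ∈ Aspace n k)
    (h : ∀ I : Finset (Fin n), I.card = k → coeffI f I = 0) : f = 0 := by
  rw [expansion hf]
  apply Finset.sum_eq_zero
  intro I hI
  rw [h I (Finset.mem_powersetCard.1 hI).2, zero_smul]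

-- chunk 2 (appended after chunk 1 content)
lemma elim_inj_left {n k : ℕ} {i j : Fin k → Fin n} (h : Function.Injective (Sum.elim i j)) :
    Function.Injective i := fun a b hab => by
  have : Sum.elim i j (Sum.inl a) = Sum.elim i j (Sum.inl b) := hab
  simpa using h this

lemma elim_inj_right {n k : ℕ} {i j : Fin k → Fin n} (h : Function.Injective (Sum.elim i j)) :
    Function.Injective j := fun a b hab => by
  have : Sum.elim i j (Sum.inr a) = Sum.elim i j (Sum.inr b) := hab
  simpa using h this

lemma elim_inj_ne {n k : ℕ} {i j : Fin k → Fin n} (h : Function.Injective (Sum.elim i j))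
    (a b : Fin k) : i a ≠ j b := fun hab => by
  have : Sum.elim i j (Sum.inl a) = Sum.elim i j (Sum.inr b) := hab
  exact absurd (h this) (by simp)

lemma pm_mem_AspV {n k : ℕ} (i j : Fin k → Fin n) (hinj : Function.Injective (Sum.elim i j)) :
    (∏ t : Fin k, (X (i t) - X (j t))) ∈ AspV n k ((univ.image i) ∪ (univ.image j)) := by
  classical
  have hi := elim_inj_left hinj
  have hj := elim_inj_right hinj
  have hexp : ∏ t : Fin k, (X (i t) - X (j t)) =
      ∑ t ∈ (univ : Finset (Fin k)).powerset,
        ((-1 : ℂ) ^ (univ \ t).card) • xI n (t.image i ∪ (univ \ t).image j) := by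
    have : ∀ t : Fin k, (X (i t) - X (j t) : MvPolynomial (Fin n) ℂ) = X (i t) + (-X (j t)) := fun t => sub_eq_add_neg _ _
    rw [Finset.prod_congr rfl (fun t _ => this t), Finset.prod_add]
    apply Finset.sum_congr rfl
    intro t _
    have h1 : ∏ a ∈ t, X (i a) = xI n (t.image i) :=
      (Finset.prod_image (fun a _ b _ h => hi h)).symm
    have h2 : ∏ a ∈ univ \ t, (X (j a) : MvPolynomial (Fin n) ℂ) = xI n ((univ \ t).image j) :=
      (Finset.prod_image (fun a _ b _ h => hj h)).symm
    have h3 : ∀ s : Finset (Fin k), ∏ a ∈ s, (-X (j a) : MvPolynomial (Fin n) ℂ) =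
        ((-1 : ℂ) ^ s.card) • ∏ a ∈ s, (X (j a) : MvPolynomial (Fin n) ℂ) := by
      intro s
      induction s using Finset.induction with
      | empty => simp
      | @insert a s ha ih =>
        rw [Finset.prod_insert ha, Finset.prod_insert ha, ih,
          Finset.card_insert_of_notMem ha, pow_succ, mul_smul_comm, mul_smul, neg_one_smul]
        congr 1
        rw [neg_mul]
    have h3 := h3 (univ \ t)
    have hdisj : Disjoint (t.image i) ((univ \ t).image j) := by
      rw [Finset.disjoint_left]
      rintro x hx1 hx2
      obtain ⟨a, _, rfl⟩ := Finset.mem_image.1 hx1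
      obtain ⟨b, _, hb⟩ := Finset.mem_image.1 hx2
      exact elim_inj_ne hinj a b hb.symm
    rw [h1, h3, h2, mul_smul_comm]
    congr 1
    simp only [xI]
    exact (Finset.prod_union hdisj).symm
  rw [hexp]
  apply Submodule.sum_mem
  intro t ht
  apply Submodule.smul_mem
  apply Submodule.subset_span
  refine ⟨t.image i ∪ (univ \ t).image j, ?_, ?_, rfl⟩
  · have hdisj : Disjoint (t.image i) ((univ \ t).image j) := by
      rw [Finset.disjoint_left]
      rintro x hx1 hx2
      obtain ⟨a, _, rfl⟩ := Finset.mem_image.1 hx1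
      obtain ⟨b, _, hb⟩ := Finset.mem_image.1 hx2
      exact elim_inj_ne hinj a b hb.symm
    rw [Finset.card_union_of_disjoint hdisj, Finset.card_image_of_injective _ hi,
      Finset.card_image_of_injective _ hj, Finset.card_sdiff_of_subset (Finset.subset_univ t),
      Finset.card_univ, Fintype.card_fin]
    have : t.card ≤ k := by
      simpa using Finset.card_le_card (Finset.subset_univ t)
    omega
  · exact Finset.union_subset_union (Finset.image_subset_image (Finset.subset_univ t))
      (Finset.image_subset_image (Finset.subset_univ _))

lemma pm_mem_Aspace {n k : ℕ} (i j : Fin k → Fin n) (hinj : Function.Injective (Sum.elim i j)) :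
    (∏ t : Fin k, (X (i t) - X (j t))) ∈ Aspace n k :=
  AspV_le_Aspace _ (pm_mem_AspV i j hinj)

lemma coeff_pderiv {n : ℕ} (i : Fin n) (f : MvPolynomial (Fin n) ℂ) (m : Fin n →₀ ℕ) :
    coeff m (pderiv i f) = ((m i + 1 : ℕ) : ℂ) * coeff (m + Finsupp.single i 1) f := by
  classical
  induction f using MvPolynomial.induction_on' with
  | add p q hp hq => simp [map_add, coeff_add, hp, hq, mul_add]
  | monomial u a =>
    rw [pderiv_monomial, coeff_monomial, coeff_monomial]
    by_cases h : u = m + Finsupp.single i 1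
    · subst h
      rw [if_pos (add_tsub_cancel_right _ _)]
      have h4 : ((m + Finsupp.single i 1 : Fin n →₀ ℕ)) i = m i + 1 := by
        rw [Finsupp.add_apply, Finsupp.single_eq_same]
      rw [h4]
      simp only [if_pos]
      ring
    · rw [if_neg h, mul_zero]
      by_cases h2 : u - Finsupp.single i 1 = m
      · rw [if_pos h2]
        rcases Nat.eq_zero_or_pos (u i) with h3 | h3
        · simp [h3]
        · exfalso
          apply h
          have hle : Finsupp.single i 1 ≤ u := by
            rw [Finsupp.single_le_iff]; omega
          rw [← h2, tsub_add_cancel_of_le hle]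
      · rw [if_neg h2]

def Dp {n : ℕ} (f : MvPolynomial (Fin n) ℂ) : MvPolynomial (Fin n) ℂ := ∑ i : Fin n, pderiv i f

lemma Dp_mul {n : ℕ} (f g : MvPolynomial (Fin n) ℂ) :
    Dp (f * g) = Dp f * g + f * Dp g := by
  simp only [Dp, pderiv_mul, Finset.sum_add_distrib, Finset.mul_sum, Finset.sum_mul]

lemma Dp_X_sub_X {n : ℕ} (a b : Fin n) : Dp (X a - X b : MvPolynomial (Fin n) ℂ) = 0 := by
  have h : ∀ c : Fin n, Dp (X c : MvPolynomial (Fin n) ℂ) = 1 := by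
    intro c
    rw [Dp]
    rw [Finset.sum_congr rfl (fun i _ => pderiv_X i c)]
    simp [Pi.single_apply]
  simp only [Dp, map_sub]
  rw [Finset.sum_sub_distrib, ← Dp, ← Dp, h, h, sub_self]

lemma Dp_pm {n k : ℕ} (i j : Fin k → Fin n) (s : Finset (Fin k)) :
    Dp (∏ t ∈ s, (X (i t) - X (j t))) = 0 := by
  classical
  induction s using Finset.induction with
  | empty =>
    simp only [Finset.prod_empty]
    have : (1 : MvPolynomial (Fin n) ℂ) = C 1 := by simp
    simp [Dp]
  | @insert a s ha ih =>
    rw [Finset.prod_insert ha, Dp_mul, ih, Dp_X_sub_X, mul_zero, zero_mul, add_zero]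

lemma coeff_eq_zero_of_two {n k : ℕ} {f : MvPolynomial (Fin n) ℂ} (hf : f ∈ Aspace n k)
    {m : Fin n →₀ ℕ} {x : Fin n} (hx : 2 ≤ m x) : coeff m f = 0 := by
  have : Aspace n k ≤ LinearMap.ker (lcoeff ℂ m) := by
    rw [Aspace, Submodule.span_le]
    rintro g ⟨S, hS, rfl⟩
    simp only [SetLike.mem_coe, LinearMap.mem_ker, lcoeff_apply]
    rw [xI_eq_monomial, coeff_monomial, if_neg]
    intro h
    have := congrArg (fun g => g x) h
    simp only [dI_apply] at this
    by_cases hxS : x ∈ S <;> simp [hxS] at this <;> omega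
  simpa using this hf

lemma dI_insert {n : ℕ} {x : Fin n} {J : Finset (Fin n)} (hx : x ∉ J) :
    dI (insert x J) = dI J + Finsupp.single x 1 := by
  rw [dI, Finset.sum_insert hx, ← dI, add_comm]

/-- `A⁰_{n,k}`: elements `∑ c_I x_I` of `A_{n,k}` with `∑_{j ∉ J} c_{J ∪ {j}} = 0`
for every `(k-1)`-element subset `J`. -/
def A0space (n k : ℕ) : Submodule ℂ (MvPolynomial (Fin n) ℂ) where
  carrier := {f | f ∈ Aspace n k ∧ ∀ J : Finset (Fin n), J.card = k - 1 →
    ∑ j ∈ Jᶜ, coeffI f (insert j J) = 0}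
  add_mem' := by
    rintro f g ⟨hf1, hf2⟩ ⟨hg1, hg2⟩
    refine ⟨Submodule.add_mem _ hf1 hg1, fun J hJ => ?_⟩
    have h1 := hf2 J hJ
    have h2 := hg2 J hJ
    simp only [coeffI] at h1 h2 ⊢
    simp only [coeff_add]
    rw [Finset.sum_add_distrib, h1, h2, add_zero]
  zero_mem' := by
    refine ⟨Submodule.zero_mem _, fun J hJ => ?_⟩
    simp [coeffI]
  smul_mem' := by
    rintro c f ⟨hf1, hf2⟩
    refine ⟨Submodule.smul_mem _ c hf1, fun J hJ => ?_⟩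
    have h1 := hf2 J hJ
    simp only [coeffI] at h1 ⊢
    simp only [coeff_smul, smul_eq_mul]
    rw [← Finset.mul_sum, h1, mul_zero]

lemma pm_mem_A0space {n k : ℕ} (i j : Fin k → Fin n)
    (hinj : Function.Injective (Sum.elim i j)) :
    (∏ t : Fin k, (X (i t) - X (j t))) ∈ A0space n k := by
  classical
  have hpm : (∏ t : Fin k, (X (i t) - X (j t))) ∈ Aspace n k := pm_mem_Aspace i j hinj
  refine ⟨hpm, fun J hJ => ?_⟩
  have h0 : coeff (dI J) (Dp (∏ t : Fin k, (X (i t) - X (j t)))) = 0 := by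
    rw [Dp_pm i j univ]
    exact coeff_zero _
  rw [Dp, MvPolynomial.coeff_sum] at h0
  rw [Finset.sum_congr rfl (fun x _ => coeff_pderiv x (∏ t : Fin k, (X (i t) - X (j t))) (dI J))] at h0
  rw [← Finset.sum_add_sum_compl J] at h0
  have hJ0 : ∀ x ∈ J, ((dI J x + 1 : ℕ) : ℂ) *
      coeff (dI J + Finsupp.single x 1) (∏ t : Fin k, (X (i t) - X (j t))) = 0 := by
    intro x hx
    rw [coeff_eq_zero_of_two hpm (x := x) ?_, mul_zero]
    rw [Finsupp.add_apply, dI_apply, if_pos hx, Finsupp.single_eq_same]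
  rw [Finset.sum_eq_zero hJ0, zero_add] at h0
  rw [← h0]
  apply Finset.sum_congr rfl
  intro x hx
  have hxJ : x ∉ J := Finset.mem_compl.1 hx
  rw [coeffI_eq, dI_insert hxJ, dI_apply, if_neg hxJ]
  norm_num

section Gmach

variable {n : ℕ} (k : ℕ) (c : Finset (Fin n) → ℂ)

def Gs (J F : Finset (Fin n)) (r : ℕ) : ℂ := ∑ T ∈ Fᶜ.powersetCard r, c (J ∪ T)

variable (hA0 : ∀ J : Finset (Fin n), J.card = k - 1 → ∑ j ∈ Jᶜ, c (insert j J) = 0)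
variable (hk : 1 ≤ k)

include hA0 hk in
lemma GA : ∀ r, 1 ≤ r → ∀ J : Finset (Fin n), J.card + r = k → Gs c J J r = 0 := by
  intro r hr
  induction r, hr using Nat.le_induction with
  | base =>
    intro J hJ
    have hJc : J.card = k - 1 := by omega
    have h := hA0 J hJc
    rw [Gs, Finset.powersetCard_one, Finset.sum_map]
    rw [← h]
    apply Finset.sum_congr rfl
    intro x _
    congr 1
    ext y; simp [or_comm]
  | succ r hr ih =>
    intro J hJ
    have key : ∑ j ∈ Jᶜ, Gs c (insert j J) (insert j J) r = ((r : ℂ) + 1) * Gs c J J (r + 1) := by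
      unfold Gs
      rw [Finset.sum_sigma' Jᶜ (fun j => ((insert j J)ᶜ).powersetCard r)
        (fun j T' => c (insert j J ∪ T'))]
      have hrhs : ((r : ℂ) + 1) * ∑ T ∈ Jᶜ.powersetCard (r + 1), c (J ∪ T)
          = ∑ T ∈ Jᶜ.powersetCard (r + 1), ∑ _j ∈ T, c (J ∪ T) := by
        rw [Finset.mul_sum]
        apply Finset.sum_congr rfl
        intro T hT
        rw [Finset.sum_const, Finset.mem_powersetCard.1 hT |>.2, nsmul_eq_mul]
        push_cast
        ring
      rw [hrhs, Finset.sum_sigma' (Jᶜ.powersetCard (r + 1)) (fun T => T)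
        (fun T _j => c (J ∪ T))]
      apply Finset.sum_nbij' (i := fun x => (⟨insert x.1 x.2, x.1⟩ :
          Σ _T : Finset (Fin n), Fin n))
        (j := fun y => (⟨y.2, y.1.erase y.2⟩ : Σ _j : Fin n, Finset (Fin n)))
      · rintro ⟨j, T'⟩ hx
        simp only [Finset.mem_sigma, Finset.mem_powersetCard] at hx ⊢
        obtain ⟨hj, hT's, hT'c⟩ := hx
        have hjT' : j ∉ T' := fun h => by
          have := hT's h
          simp at this
        refine ⟨⟨?_, ?_⟩, Finset.mem_insert_self _ _⟩
        · intro x hx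
          rcases Finset.mem_insert.1 hx with rfl | hx
          · exact hj
          · have := hT's hx
            rw [Finset.mem_compl] at this ⊢
            exact fun h => this (Finset.mem_insert_of_mem h)
        · rw [Finset.card_insert_of_notMem hjT', hT'c]
      · rintro ⟨T, j⟩ hy
        simp only [Finset.mem_sigma, Finset.mem_powersetCard] at hy ⊢
        obtain ⟨⟨hTs, hTc⟩, hj⟩ := hy
        refine ⟨Finset.mem_compl.2 (fun h => Finset.mem_compl.1 (hTs hj) h), ?_, ?_⟩
        · intro x hx
          rw [Finset.mem_compl, Finset.mem_insert]
          have hx1 := Finset.mem_of_mem_erase hx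
          have hx2 := Finset.ne_of_mem_erase hx
          push_neg
          exact ⟨hx2, Finset.mem_compl.1 (hTs hx1)⟩
        · rw [Finset.card_erase_of_mem hj, hTc]
          rfl
      · rintro ⟨j, T'⟩ hx
        simp only [Finset.mem_sigma, Finset.mem_powersetCard] at hx
        obtain ⟨hj, hT's, hT'c⟩ := hx
        have hjT' : j ∉ T' := fun h => by
          have := hT's h
          simp at this
        simp [Finset.erase_insert hjT']
      · rintro ⟨T, j⟩ hy
        simp only [Finset.mem_sigma, Finset.mem_powersetCard] at hy
        simp [Finset.insert_erase hy.2]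
      · rintro ⟨j, T'⟩ _
        simp only
        rw [Finset.insert_union, Finset.union_insert]
    have hz : ∀ j ∈ Jᶜ, Gs c (insert j J) (insert j J) r = 0 := by
      intro j hj
      exact ih (insert j J) (by rw [Finset.card_insert_of_notMem (Finset.mem_compl.1 hj)]; omega)
    rw [Finset.sum_eq_zero hz] at key
    have hne : ((r : ℂ) + 1) ≠ 0 := by
      have h' : ((r + 1 : ℕ) : ℂ) ≠ 0 := Nat.cast_ne_zero.2 (Nat.succ_ne_zero r)
      push_cast at h'
      exact h'
    rcases mul_eq_zero.1 key.symm with h | h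
    · exact absurd h hne
    · exact h

lemma Grec (J F : Finset (Fin n)) (x : Fin n) (hx : x ∈ F) (hxJ : x ∉ J) (r : ℕ) :
    Gs c J (F.erase x) (r + 1) = Gs c J F (r + 1) + Gs c (insert x J) F r := by
  unfold Gs
  have hxFc : x ∉ Fᶜ := by simp [hx]
  rw [Finset.compl_erase, Finset.powersetCard_succ_insert hxFc]
  rw [Finset.sum_union, Finset.sum_image]
  · congr 1
    apply Finset.sum_congr rfl
    intro T _
    rw [Finset.union_insert, Finset.insert_union]
  · intro a ha b hb hab
    have haa : x ∉ a := fun h => hxFc ((Finset.mem_powersetCard.1 ha).1 h)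
    have hbb : x ∉ b := fun h => hxFc ((Finset.mem_powersetCard.1 hb).1 h)
    rw [← Finset.erase_insert haa, hab, Finset.erase_insert hbb]
  · rw [Finset.disjoint_left]
    rintro T hT1 hT2
    obtain ⟨T', _, rfl⟩ := Finset.mem_image.1 hT2
    have := (Finset.mem_powersetCard.1 hT1).1 (Finset.mem_insert_self x T')
    exact hxFc this

include hA0 hk in
lemma GC : ∀ (v : ℕ), ∀ J F : Finset (Fin n), (F \ J).card = v → J ⊆ F → F.card ≤ k - 1 →
    Gs c J F (k - J.card) = 0 := by
  intro v
  induction v with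
  | zero =>
    intro J F hv hJF hF
    have : F = J := by
      apply Finset.Subset.antisymm _ hJF
      rw [← Finset.sdiff_eq_empty_iff_subset, ← Finset.card_eq_zero, hv]
    subst this
    exact GA k c hA0 hk (k - F.card) (by omega) F (by omega)
  | succ v ih =>
    intro J F hv hJF hF
    have hne : (F \ J).Nonempty := by
      rw [← Finset.card_pos, hv]; omega
    obtain ⟨x, hx⟩ := hne
    have hxF : x ∈ F := (Finset.mem_sdiff.1 hx).1
    have hxJ : x ∉ J := (Finset.mem_sdiff.1 hx).2
    have hJcard : J.card ≤ k - 1 := le_trans (Finset.card_le_card hJF) hF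
    have hr : k - J.card = (k - J.card - 1) + 1 := by omega
    have h1 : Gs c J (F.erase x) (k - J.card) = 0 := by
      apply ih J (F.erase x)
      · rw [Finset.erase_sdiff_comm, Finset.card_erase_of_mem hx, hv]
        omega
      · intro y hy
        exact Finset.mem_erase.2 ⟨fun h => hxJ (h ▸ hy), hJF hy⟩
      · calc (F.erase x).card ≤ F.card := Finset.card_erase_le
          _ ≤ k - 1 := hF
    have h2 : Gs c (insert x J) F (k - J.card - 1) = 0 := by
      have hsd : (F \ insert x J).card = v := by
        rw [Finset.sdiff_insert, Finset.card_erase_of_mem hx, hv]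
        omega
      have := ih (insert x J) F hsd (Finset.insert_subset hxF hJF) hF
      rwa [Finset.card_insert_of_notMem hxJ,
        show k - (J.card + 1) = k - J.card - 1 by omega] at this
    rw [hr] at h1
    rw [Grec c J F x hxF hxJ _] at h1
    rw [hr]
    linear_combination h1 - h2


-- chunk 4

include hA0 hk in
lemma GD : ∀ (v : ℕ), ∀ J I : Finset (Fin n), (I \ J).card = v → J ⊆ I → I.card = k →
    Gs c J I (k - J.card) = (-1 : ℂ) ^ (k - J.card) * c I := by
  intro v
  induction v with
  | zero =>
    intro J I hv hJI hI
    have hJ : I = J := by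
      apply Finset.Subset.antisymm _ hJI
      rw [← Finset.sdiff_eq_empty_iff_subset, ← Finset.card_eq_zero, hv]
    subst hJ
    rw [hI, Nat.sub_self]
    simp [Gs, Finset.powersetCard_zero]
  | succ v ih =>
    intro J I hv hJI hI
    have hne : (I \ J).Nonempty := by
      rw [← Finset.card_pos, hv]; omega
    obtain ⟨x, hx⟩ := hne
    have hxI : x ∈ I := (Finset.mem_sdiff.1 hx).1
    have hxJ : x ∉ J := (Finset.mem_sdiff.1 hx).2
    have hJcard : J.card < k := by
      have h1 : (I \ J).card = I.card - J.card := Finset.card_sdiff_of_subset hJI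
      have h2 : J.card ≤ I.card := Finset.card_le_card hJI
      omega
    have hr : k - J.card = (k - J.card - 1) + 1 := by omega
    have h1 : Gs c J (I.erase x) (k - J.card) = 0 := by
      apply GC k c hA0 hk ((I.erase x \ J).card) J (I.erase x) rfl
      · intro y hy
        exact Finset.mem_erase.2 ⟨fun h => hxJ (h ▸ hy), hJI hy⟩
      · rw [Finset.card_erase_of_mem hxI, hI]
    have h2 : Gs c (insert x J) I (k - J.card - 1) = (-1 : ℂ) ^ (k - J.card - 1) * c I := by
      have hsd : (I \ insert x J).card = v := by
        rw [Finset.sdiff_insert, Finset.card_erase_of_mem hx, hv]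
        omega
      have := ih (insert x J) I hsd (Finset.insert_subset hxI hJI) hI
      rwa [Finset.card_insert_of_notMem hxJ,
        show k - (J.card + 1) = k - J.card - 1 by omega] at this
    rw [hr] at h1
    rw [Grec c J I x hxI hxJ _] at h1
    rw [hr, pow_succ]
    linear_combination h1 - h2

end Gmach

lemma card_filter_lt_le {n m : ℕ} : (univ.filter (fun x : Fin n => x.val < m)).card ≤ m := by
  classical
  have h : ((univ.filter (fun x : Fin n => x.val < m)).image Fin.val) ⊆ Finset.range m := by
    intro y hy
    obtain ⟨x, hx, rfl⟩ := Finset.mem_image.1 hy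
    exact Finset.mem_range.2 (Finset.mem_filter.1 hx).2
  calc (univ.filter (fun x : Fin n => x.val < m)).card
      = ((univ.filter (fun x : Fin n => x.val < m)).image Fin.val).card :=
        (Finset.card_image_of_injective _ Fin.val_injective).symm
    _ ≤ (Finset.range m).card := Finset.card_le_card h
    _ = m := Finset.card_range m

lemma vanish_of_small_support {n k : ℕ} (hk1 : 1 ≤ k) {f : MvPolynomial (Fin n) ℂ}
    (hf : f ∈ A0space n k) (V : Finset (Fin n)) (hV : V.card ≤ 2 * k - 1)
    (hsupp : ∀ M : Finset (Fin n), coeffI f M ≠ 0 → M ⊆ V) : f = 0 := by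
  classical
  obtain ⟨hfA, hfc⟩ := hf
  apply eq_zero_of_coeffI hfA
  intro I hI
  by_cases hIV : I ⊆ V
  · have hGD := GD k (coeffI f) hfc hk1 ((I \ ∅).card) ∅ I rfl (Finset.empty_subset I) hI
    have hzero : Gs (coeffI f) ∅ I (k - (∅ : Finset (Fin n)).card) = 0 := by
      apply Finset.sum_eq_zero
      intro T hT
      by_contra h
      have hTV := hsupp _ h
      rw [Finset.empty_union] at hTV
      obtain ⟨hTc, hTcard⟩ := Finset.mem_powersetCard.1 hT
      have hTVI : T ⊆ V \ I := fun y hy =>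
        Finset.mem_sdiff.2 ⟨hTV hy, fun hyI => Finset.mem_compl.1 (hTc hy) hyI⟩
      have hcard : T.card ≤ (V \ I).card := Finset.card_le_card hTVI
      have h3 : (V \ I).card = V.card - I.card := Finset.card_sdiff_of_subset hIV
      simp only [Finset.card_empty, Nat.sub_zero] at hTcard
      have h4 : I.card ≤ V.card := Finset.card_le_card hIV
      omega
    rw [hzero] at hGD
    have hpow : ((-1 : ℂ) ^ (k - (∅ : Finset (Fin n)).card)) ≠ 0 := by
      apply pow_ne_zero
      norm_num
    rcases mul_eq_zero.1 hGD.symm with h | h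
    · exact absurd h hpow
    · exact h
  · by_contra h
    exact hIV (hsupp I h)

-- chunk 5

def PsetM (n k m : ℕ) : Set (MvPolynomial (Fin n) ℂ) :=
  {f | ∃ i j : Fin k → Fin n, Function.Injective (Sum.elim i j) ∧
    (∀ t, (i t).val < m ∧ (j t).val < m) ∧ f = ∏ t : Fin k, (X (i t) - X (j t))}

lemma PsetM_mono {n k m m' : ℕ} (h : m ≤ m') : PsetM n k m ⊆ PsetM n k m' := by
  rintro f ⟨i, j, h1, h2, h3⟩
  exact ⟨i, j, h1, fun t => ⟨lt_of_lt_of_le (h2 t).1 h, lt_of_lt_of_le (h2 t).2 h⟩, h3⟩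

lemma span_PsetM_le_A0 {n k m : ℕ} : Submodule.span ℂ (PsetM n k m) ≤ A0space n k := by
  rw [Submodule.span_le]
  rintro f ⟨i, j, h1, _, rfl⟩
  exact pm_mem_A0space i j h1

lemma elim_injective_of {n k : ℕ} {i j : Fin k → Fin n} (hi : Function.Injective i)
    (hj : Function.Injective j) (hij : ∀ a b, i a ≠ j b) :
    Function.Injective (Sum.elim i j) := by
  rintro (a | a) (b | b) h <;> simp only [Sum.elim_inl, Sum.elim_inr] at h
  · rw [hi h]
  · exact absurd h (hij a b)
  · exact absurd h.symm (hij b a)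
  · rw [hj h]

lemma mul_X_mem_AspV {n k : ℕ} {V : Finset (Fin n)} {b : Fin n} (hb : b ∉ V)
    {f : MvPolynomial (Fin n) ℂ} (hf : f ∈ AspV n k V) :
    X b * f ∈ AspV n (k + 1) (insert b V) := by
  classical
  induction hf using Submodule.span_induction with
  | mem g hg =>
    obtain ⟨I, hI1, hI2, rfl⟩ := hg
    apply Submodule.subset_span
    refine ⟨insert b I, ?_, ?_, ?_⟩
    · rw [Finset.card_insert_of_notMem (fun h => hb (hI2 h)), hI1]
    · exact Finset.insert_subset_insert _ hI2
    · rw [xI, xI, Finset.prod_insert (fun h => hb (hI2 h))]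
  | zero => rw [mul_zero]; exact Submodule.zero_mem _
  | add g g' _ _ h1 h2 => rw [mul_add]; exact Submodule.add_mem _ h1 h2
  | smul a g _ h1 => rw [Algebra.mul_smul_comm]; exact Submodule.smul_mem _ _ h1

lemma coeffI_sum_smul_xI {n : ℕ} (s : Finset (Finset (Fin n))) (a : Finset (Fin n) → ℂ)
    (M : Finset (Fin n)) :
    coeffI (∑ I ∈ s, a I • xI n I) M = if M ∈ s then a M else 0 := by
  classical
  rw [coeffI_sum]
  have hcg : ∀ I ∈ s, coeffI (a I • xI n I) M = if I = M then a I else 0 := by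
    intro I _
    rw [coeffI_smul, coeffI_xI, mul_ite, mul_one, mul_zero]
  rw [Finset.sum_congr rfl hcg]
  exact Finset.sum_ite_eq' s M a

lemma lift_lemma {n k' m : ℕ} (hm : 2 * (k' + 1) ≤ m) (hmn : m ≤ n) (z : Fin n)
    (hz : z.val = m - 1) {g : MvPolynomial (Fin n) ℂ}
    (hg : g ∈ Submodule.span ℂ (PsetM n k' (m - 1))) :
    ∃ F ∈ Submodule.span ℂ (PsetM n (k' + 1) m),
      ∀ M : Finset (Fin n), coeffI (F - X z * g) M ≠ 0 → ∀ x ∈ M, x.val < m - 1 := by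
  classical
  induction hg using Submodule.span_induction with
  | zero =>
    refine ⟨0, Submodule.zero_mem _, fun M hM => ?_⟩
    rw [mul_zero, sub_zero, coeffI_zero] at hM
    exact absurd rfl hM
  | add g g' _ _ h1 h2 =>
    obtain ⟨F1, hF1, hP1⟩ := h1
    obtain ⟨F2, hF2, hP2⟩ := h2
    refine ⟨F1 + F2, Submodule.add_mem _ hF1 hF2, fun M hM x hx => ?_⟩
    have : coeffI (F1 + F2 - X z * (g + g')) M
        = coeffI (F1 - X z * g) M + coeffI (F2 - X z * g') M := by
      rw [← coeffI_add]
      congr 1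
      ring
    rw [this] at hM
    by_cases h1' : coeffI (F1 - X z * g) M = 0
    · rw [h1', zero_add] at hM
      exact hP2 M hM x hx
    · exact hP1 M h1' x hx
  | smul a g _ h1 =>
    obtain ⟨F1, hF1, hP1⟩ := h1
    refine ⟨a • F1, Submodule.smul_mem _ _ hF1, fun M hM x hx => ?_⟩
    have : coeffI (a • F1 - X z * (a • g)) M = a * coeffI (F1 - X z * g) M := by
      rw [← coeffI_smul]
      congr 1
      rw [Algebra.mul_smul_comm, smul_sub]
    rw [this] at hM
    apply hP1 M (fun h => hM (by rw [h, mul_zero])) x hx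
  | mem q hq =>
    obtain ⟨i, j, hinj, hbd, rfl⟩ := hq
    -- choose b
    set cand := (univ.filter (fun x : Fin n => x.val < m - 1)) \
      ((univ.image i) ∪ (univ.image j)) with hcand
    have hcandne : cand.Nonempty := by
      rw [← Finset.card_pos]
      have h1 : m - 1 ≤ (univ.filter (fun x : Fin n => x.val < m - 1)).card := by
        have hsub : (univ.image (Fin.castLE (show m - 1 ≤ n by omega)) :
            Finset (Fin n)) ⊆ univ.filter (fun x : Fin n => x.val < m - 1) := by
          intro y hy
          obtain ⟨x, _, rfl⟩ := Finset.mem_image.1 hy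
          exact Finset.mem_filter.2 ⟨Finset.mem_univ _, x.isLt⟩
        calc m - 1 = (univ : Finset (Fin (m-1))).card := by simp
          _ = ((univ : Finset (Fin (m-1))).image (Fin.castLE (show m - 1 ≤ n by omega))).card :=
            (Finset.card_image_of_injective _ (Fin.castLE_injective _)).symm
          _ ≤ _ := Finset.card_le_card hsub
      have h2 : ((univ.image i) ∪ (univ.image j)).card ≤ 2 * k' := by
        calc ((univ.image i) ∪ (univ.image j)).card
            ≤ (univ.image i).card + (univ.image j).card := Finset.card_union_le _ _
          _ ≤ k' + k' := by
              apply Nat.add_le_add <;>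
                · apply le_trans (Finset.card_image_le)
                  simp
          _ = 2 * k' := by ring
      have := Finset.le_card_sdiff ((univ.image i) ∪ (univ.image j))
        (univ.filter (fun x : Fin n => x.val < m - 1))
      rw [hcand]
      omega
    obtain ⟨b, hb⟩ := hcandne
    rw [hcand, Finset.mem_sdiff, Finset.mem_filter, Finset.mem_union] at hb
    obtain ⟨⟨_, hbval⟩, hbij⟩ := hb
    push_neg at hbij
    obtain ⟨hbi, hbj⟩ := hbij
    have hzval : z.val = m - 1 := hz
    have hzb : z ≠ b := fun h => by rw [← h] at hbval; omega
    have hzi : ∀ t, z ≠ i t := fun t h => by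
      have h2 := (hbd t).1
      rw [← h, hzval] at h2
      omega
    have hzj : ∀ t, z ≠ j t := fun t h => by
      have h2 := (hbd t).2
      rw [← h, hzval] at h2
      omega
    have hm1 : 1 ≤ m := by omega
    set i' : Fin (k' + 1) → Fin n := Fin.cons z i with hi'
    set j' : Fin (k' + 1) → Fin n := Fin.cons b j with hj'
    have hinj' : Function.Injective (Sum.elim i' j') := by
      apply elim_injective_of
      · rw [hi', Fin.cons_injective_iff]
        exact ⟨fun ⟨t, ht⟩ => hzi t ht.symm, elim_inj_left hinj⟩
      · rw [hj', Fin.cons_injective_iff]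
        refine ⟨?_, elim_inj_right hinj⟩
        rintro ⟨t, ht⟩
        exact hbj (Finset.mem_image.2 ⟨t, Finset.mem_univ t, ht⟩)
      · intro a c
        induction a using Fin.cases with
        | zero =>
          induction c using Fin.cases with
          | zero => simpa [hi', hj'] using hzb
          | succ t => simpa [hi', hj'] using hzj t
        | succ s =>
          induction c using Fin.cases with
          | zero =>
            simp only [hi', hj', Fin.cons_succ, Fin.cons_zero]
            exact fun h => hbi (Finset.mem_image.2 ⟨s, Finset.mem_univ s, h⟩)
          | succ t =>
            simp only [hi', hj', Fin.cons_succ]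
            exact elim_inj_ne hinj s t
    have hbds : ∀ t : Fin (k' + 1), (i' t).val < m ∧ (j' t).val < m := by
      intro t
      induction t using Fin.cases with
      | zero =>
        simp only [hi', hj', Fin.cons_zero]
        omega
      | succ s =>
        simp only [hi', hj', Fin.cons_succ]
        have := hbd s
        omega
    have hprod : (∏ t : Fin (k' + 1), (X (i' t) - X (j' t)) : MvPolynomial (Fin n) ℂ) =
        (X z - X b) * ∏ t : Fin k', (X (i t) - X (j t)) := by
      rw [Fin.prod_univ_succ]
      simp only [hi', hj', Fin.cons_zero, Fin.cons_succ]
    refine ⟨(X z - X b) * ∏ t : Fin k', (X (i t) - X (j t)), ?_, ?_⟩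
    · apply Submodule.subset_span
      exact ⟨i', j', hinj', hbds, hprod.symm⟩
    · intro M hM x hx
      have heq : ((X z - X b) : MvPolynomial (Fin n) ℂ) * (∏ t : Fin k', (X (i t) - X (j t)))
          - X z * (∏ t : Fin k', (X (i t) - X (j t)))
          = -(X b * ∏ t : Fin k', (X (i t) - X (j t))) := by ring
      rw [heq] at hM
      have hM' : coeffI (X b * ∏ t : Fin k', (X (i t) - X (j t))) M ≠ 0 := by
        intro h
        apply hM
        rw [coeffI_eq, coeff_neg, ← coeffI_eq, h, neg_zero]
      have hbV : b ∉ (univ.image i) ∪ (univ.image j) := by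
        rw [Finset.mem_union]
        push_neg
        exact ⟨hbi, hbj⟩
      have hmem : X b * (∏ t : Fin k', (X (i t) - X (j t))) ∈
          AspV n (k' + 1) (insert b ((univ.image i) ∪ (univ.image j))) :=
        mul_X_mem_AspV hbV (pm_mem_AspV i j hinj)
      have hMsub := (coeffI_of_mem_AspV hmem hM').2
      have := hMsub hx
      rcases Finset.mem_insert.1 this with rfl | hxx
      · exact hbval
      · rcases Finset.mem_union.1 hxx with hxi | hxj
        · obtain ⟨t, _, rfl⟩ := Finset.mem_image.1 hxi
          exact (hbd t).1
        · obtain ⟨t, _, rfl⟩ := Finset.mem_image.1 hxj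
          exact (hbd t).2

-- chunk 6

lemma card_of_coeffI_ne_zero {n k : ℕ} {f : MvPolynomial (Fin n) ℂ} (hf : f ∈ Aspace n k)
    {M : Finset (Fin n)} (hM : coeffI f M ≠ 0) : M.card = k := by
  rw [Aspace_eq_AspV] at hf
  exact (coeffI_of_mem_AspV hf hM).1

lemma MC {n : ℕ} : ∀ k, 2 * k ≤ n → ∀ m, ∀ f : MvPolynomial (Fin n) ℂ, f ∈ A0space n k →
    (∀ M : Finset (Fin n), coeffI f M ≠ 0 → ∀ x ∈ M, x.val < m) →
    f ∈ Submodule.span ℂ (PsetM n k m) := by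
  classical
  intro k
  induction k using Nat.strong_induction_on with
  | _ k ihk =>
  intro hkn m
  induction m using Nat.strong_induction_on with
  | _ m ihm =>
  intro f hf hvars
  rcases Nat.eq_zero_or_pos k with rfl | hk1
  · -- k = 0
    have hfA := hf.1
    have hexp := expansion hfA
    rw [Finset.powersetCard_zero, Finset.sum_singleton] at hexp
    rw [hexp]
    apply Submodule.smul_mem
    apply Submodule.subset_span
    refine ⟨Fin.elim0, Fin.elim0, Function.injective_of_subsingleton _, fun t => t.elim0, ?_⟩
    simp [xI]
  obtain ⟨k', rfl⟩ : ∃ k', k = k' + 1 := ⟨k - 1, by omega⟩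
  by_cases hm2k : m ≤ 2 * (k' + 1) - 1
  · -- too few variables: f = 0
    have hf0 : f = 0 := by
      apply vanish_of_small_support (show 1 ≤ k' + 1 by omega) hf
        (univ.filter (fun x : Fin n => x.val < m))
      · calc (univ.filter (fun x : Fin n => x.val < m)).card ≤ m := card_filter_lt_le
          _ ≤ 2 * (k' + 1) - 1 := hm2k
      · intro M hM x hx
        exact Finset.mem_filter.2 ⟨Finset.mem_univ _, hvars M hM x hx⟩
    rw [hf0]
    exact Submodule.zero_mem _
  by_cases hmn : m ≤ n
  swap
  · -- m > n : reduce to m = n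
    have h := ihm n (by omega) f hf (fun M hM x hx => x.isLt)
    exact Submodule.span_mono (PsetM_mono (by omega)) h
  -- main step
  have hm1 : m - 1 < m := by omega
  set z : Fin n := ⟨m - 1, by omega⟩ with hzdef
  set g : MvPolynomial (Fin n) ℂ :=
    ∑ I' ∈ (univ.erase z).powersetCard k', coeffI f (insert z I') • xI n I' with hgdef
  have hgc : ∀ M : Finset (Fin n), coeffI g M =
      if M ∈ (univ.erase z).powersetCard k' then coeffI f (insert z M) else 0 := by
    intro M
    rw [hgdef]
    exact coeffI_sum_smul_xI _ _ M
  have hgA : g ∈ Aspace n k' := by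
    rw [hgdef]
    apply Submodule.sum_mem
    intro I' hI'
    exact Submodule.smul_mem _ _
      (Submodule.subset_span ⟨I', (Finset.mem_powersetCard.1 hI').2, rfl⟩)
  have hgA0 : g ∈ A0space n k' := by
    refine ⟨hgA, fun J hJ => ?_⟩
    by_cases hzJ : z ∈ J
    · apply Finset.sum_eq_zero
      intro j _
      rw [hgc, if_neg]
      intro hmem
      have hsub := (Finset.mem_powersetCard.1 hmem).1
      have := hsub (Finset.mem_insert_of_mem hzJ)
      exact (Finset.notMem_erase z univ) this
    · by_cases hk'0 : k' = 0
      · subst hk'0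
        apply Finset.sum_eq_zero
        intro j _
        rw [hgc, if_neg]
        intro hmem
        have := (Finset.mem_powersetCard.1 hmem).2
        simp at this
      · -- k' ≥ 1
        have hzJc : z ∈ Jᶜ := Finset.mem_compl.2 hzJ
        rw [← Finset.insert_erase hzJc, Finset.sum_insert (Finset.notMem_erase z _)]
        have hterm0 : coeffI g (insert z J) = 0 := by
          rw [hgc, if_neg]
          intro hmem
          have hsub := (Finset.mem_powersetCard.1 hmem).1
          exact (Finset.notMem_erase z univ) (hsub (Finset.mem_insert_self z J))
        rw [hterm0, zero_add]
        have hJ'card : (insert z J).card = (k' + 1) - 1 := by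
          rw [Finset.card_insert_of_notMem hzJ, hJ]
          omega
        have hcond := hf.2 (insert z J) hJ'card
        have hcompl : Jᶜ.erase z = (insert z J)ᶜ := by
          rw [Finset.compl_insert]
        rw [hcompl, ← hcond]
        apply Finset.sum_congr rfl
        intro j hj
        have hjz : j ≠ z := fun h => by
          rw [h] at hj
          exact Finset.mem_compl.1 hj (Finset.mem_insert_self z J)
        have hjJ : j ∉ J := fun h => Finset.mem_compl.1 hj (Finset.mem_insert_of_mem h)
        rw [hgc, if_pos, Finset.insert_comm]
        rw [Finset.mem_powersetCard]
        constructor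
        · intro y hy
          rcases Finset.mem_insert.1 hy with rfl | hyJ
          · exact Finset.mem_erase.2 ⟨hjz, Finset.mem_univ _⟩
          · exact Finset.mem_erase.2 ⟨fun h => hzJ (h ▸ hyJ), Finset.mem_univ _⟩
        · rw [Finset.card_insert_of_notMem hjJ, hJ]
          omega
  have hgvars : ∀ M : Finset (Fin n), coeffI g M ≠ 0 → ∀ x ∈ M, x.val < m - 1 := by
    intro M hM x hx
    rw [hgc] at hM
    by_cases hmem : M ∈ (univ.erase z).powersetCard k'
    · rw [if_pos hmem] at hM
      have hxz : x ≠ z := fun h =>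
        (Finset.notMem_erase z univ) ((Finset.mem_powersetCard.1 hmem).1 (h ▸ hx))
      have hxval := hvars _ hM x (Finset.mem_insert_of_mem hx)
      have : x.val ≠ m - 1 := fun h => hxz (Fin.ext (by rw [h, hzdef]))
      omega
    · rw [if_neg hmem] at hM
      exact absurd rfl hM
  have hg_span : g ∈ Submodule.span ℂ (PsetM n k' (m - 1)) :=
    ihk k' (by omega) (by omega) (m - 1) g hgA0 hgvars
  obtain ⟨F, hFspan, hFprop⟩ := lift_lemma (by omega) hmn z rfl hg_span
  have hXzg : ∀ M : Finset (Fin n), coeffI (X z * g) M =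
      if z ∈ M ∧ M.card = k' + 1 then coeffI f M else 0 := by
    intro M
    have hrw : X z * g = ∑ M' ∈ ((univ.erase z).powersetCard k').image (insert z),
        coeffI f M' • xI n M' := by
      rw [Finset.sum_image (fun a ha b hb hab => by
        have ha' : z ∉ a := fun h => (Finset.notMem_erase z univ)
          ((Finset.mem_powersetCard.1 ha).1 h)
        have hb' : z ∉ b := fun h => (Finset.notMem_erase z univ)
          ((Finset.mem_powersetCard.1 hb).1 h)
        rw [← Finset.erase_insert ha', hab, Finset.erase_insert hb'])]
      rw [hgdef, Finset.mul_sum]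
      apply Finset.sum_congr rfl
      intro I' hI'
      have hzI' : z ∉ I' := fun h => (Finset.notMem_erase z univ)
        ((Finset.mem_powersetCard.1 hI').1 h)
      rw [Algebra.mul_smul_comm]
      congr 1
      rw [xI, xI, Finset.prod_insert hzI']
    rw [hrw, coeffI_sum_smul_xI]
    congr 1
    · apply propext
      constructor
      · intro hmem
        obtain ⟨I', hI', rfl⟩ := Finset.mem_image.1 hmem
        obtain ⟨hsub, hcard⟩ := Finset.mem_powersetCard.1 hI'
        have hzI' : z ∉ I' := fun h => (Finset.notMem_erase z univ) (hsub h)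
        exact ⟨Finset.mem_insert_self _ _, by rw [Finset.card_insert_of_notMem hzI', hcard]⟩
      · rintro ⟨hzM, hcard⟩
        apply Finset.mem_image.2
        refine ⟨M.erase z, ?_, Finset.insert_erase hzM⟩
        rw [Finset.mem_powersetCard]
        exact ⟨fun y hy => Finset.mem_erase.2 ⟨(Finset.mem_erase.1 hy).1, Finset.mem_univ _⟩,
          by rw [Finset.card_erase_of_mem hzM, hcard]; omega⟩
  have hf1A0 : f - F ∈ A0space n (k' + 1) :=
    Submodule.sub_mem _ hf (span_PsetM_le_A0 hFspan)
  have hf1vars : ∀ M : Finset (Fin n), coeffI (f - F) M ≠ 0 → ∀ x ∈ M, x.val < m - 1 := by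
    intro M hM x hx
    have hdecomp : f - F = (f - X z * g) - (F - X z * g) := by ring
    rw [hdecomp, coeffI_sub] at hM
    by_cases h2 : coeffI (F - X z * g) M = 0
    · rw [h2, sub_zero, coeffI_sub, hXzg] at hM
      by_cases hc : z ∈ M ∧ M.card = k' + 1
      · rw [if_pos hc, sub_self] at hM
        exact absurd rfl hM
      · rw [if_neg hc, sub_zero] at hM
        have hcard := card_of_coeffI_ne_zero hf.1 hM
        have hzM : z ∉ M := fun h => hc ⟨h, hcard⟩
        have hxval := hvars M hM x hx
        have hxz : x ≠ z := fun h => hzM (h ▸ hx)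
        have : x.val ≠ m - 1 := fun h => hxz (Fin.ext (by rw [h, hzdef]))
        omega
    · exact hFprop M h2 x hx
  have hf1span := ihm (m - 1) hm1 (f - F) hf1A0 hf1vars
  have hfeq : f = (f - F) + F := by ring
  rw [hfeq]
  exact Submodule.add_mem _ (Submodule.span_mono (PsetM_mono (by omega)) hf1span) hFspan


/-- `ψ_n^l`, the linear map sending the square-free monomial `x_I` to
`x_I · ∑_S x_S`, the sum over all `l`-element subsets `S` of `{1,…,n} \ I`. -/
def psi (n l : ℕ) : MvPolynomial (Fin n) ℂ →ₗ[ℂ] MvPolynomial (Fin n) ℂ :=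
  ∑ S ∈ Finset.univ.filter (fun S : Finset (Fin n) => S.card = l),
    (LinearMap.mulRight ℂ (xI n S)).comp
      (aeval (fun i : Fin n => if i ∈ S then 0 else X i) :
        MvPolynomial (Fin n) ℂ →ₐ[ℂ] MvPolynomial (Fin n) ℂ).toLinearMap

/-- `H^k_{n,m} = ψ_n^{m-k}(A⁰_{n,k})`. -/
def Hspace (n m k : ℕ) : Submodule ℂ (MvPolynomial (Fin n) ℂ) :=
  (A0space n k).map (psi n (m - k))

/-- The squared norm of a form: the monomials `x_I` are an orthonormal basis. -/
def sqNorm {n : ℕ} (f : MvPolynomial (Fin n) ℂ) : ℝ :=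
  ∑ d ∈ f.support, Complex.normSq (f.coeff d)

/-- The inner product of two forms: the monomials `x_I` are an orthonormal basis. -/
def pInner {n : ℕ} (f g : MvPolynomial (Fin n) ℂ) : ℂ :=
  ∑ d ∈ f.support, f.coeff d * (starRingEnd ℂ) (g.coeff d)

/-- For `0 ≤ 2k ≤ n`, `A⁰_{n,k}` equals the linear span of the pseudo-monomials
`(x_{i_1}-x_{j_1})⋯(x_{i_k}-x_{j_k})` over all choices of `2k` pairwise distinct
indices `i_1,…,i_k,j_1,…,j_k`. -/
theorem A0_spanned_by_pseudo_monomials (n k : ℕ) (hk : 2 * k ≤ n) :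
    A0space n k = Submodule.span ℂ
      {f | ∃ i j : Fin k → Fin n, Function.Injective (Sum.elim i j) ∧
        f = ∏ t : Fin k, (X (i t) - X (j t))} := by
  apply le_antisymm
  · intro f hf
    have h := MC k hk n f hf (fun M _ x _ => x.isLt)
    refine Submodule.span_mono ?_ h
    rintro q ⟨i, j, h1, _, h3⟩
    exact ⟨i, j, h1, h3⟩
  · rw [Submodule.span_le]
    rintro f ⟨i, j, h1, rfl⟩
    exact pm_mem_A0space i j h1


end
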